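/- arXiv:2305.14258 — 2 statements merged into one kernel-verified Lean document; each statement's English description precedes it below -/
import Mathlib

section
/- (Noisy-label AUC risk.) Let p_P and p_N be probability measures on X, let η_P, η_N ∈ [0,1], and define the noisy class-conditional distributions p_P̃ = (1−η_P)·p_P + η_P·p_N and p_Ñ = η_N·p_P + (1−η_N)·p_N. Assume f : X → ℝ is measurable and the pushforward distributions of f under p_P and under p_N are atomless. Then the noisy 0–1 AUC risk satisfies R(f; p_P̃, p_Ñ) = ã·R_PN(f) + (1 − ã)/2, where ã = 1 − η_P − η_N. -/
/-!
The AUC risk is bilinear in the pair of class-conditional measures, so the noisy risk expands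
into `R(f; p_P, p_N)`, `R(f; p_N, p_P)`, `R(f; p_P, p_P)` and `R(f; p_N, p_N)`. When the score
distribution of `ν` has no atoms, ties `f x = f x'` are null, so for probability measures
`R(f; μ, ν) + R(f; ν, μ) = 1`; in particular `R(f; μ, μ) = 1/2`. Substituting these into the
expansion leaves an affine function of `R(f; p_P, p_N)`.
-/

open MeasureTheory

/-- The AUC risk of score function `f` under the 0–1 loss, with positive distribution `μ`
and negative distribution `ν`: `R(f; μ, ν) = ∫∫ 𝟙[f(x) − f(x') < 0] dμ(x) dν(x')`. -/
noncomputable def AUCRisk {X : Type*} [MeasurableSpace X] (f : X → ℝ)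
    (μ ν : Measure X) : ℝ :=
  ∫ x, ∫ x', (if f x - f x' < 0 then (1 : ℝ) else 0) ∂ν ∂μ

section AUCRisk

variable {X : Type*} [MeasurableSpace X] {f : X → ℝ}

instance isFiniteMeasure_ofReal_smul (r : ℝ) (μ : Measure X) [IsFiniteMeasure μ] :
    IsFiniteMeasure (ENNReal.ofReal r • μ) :=
  μ.smul_finite ENNReal.ofReal_ne_top

lemma integrable_ite_neg {Y : Type*} [MeasurableSpace Y] {g : Y → ℝ} (hg : Measurable g)
    (μ : Measure Y) [IsFiniteMeasure μ] :
    Integrable (fun y => if g y < 0 then (1 : ℝ) else 0) μ :=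
  .of_bound (measurable_const.ite (hg measurableSet_Iio) measurable_const).aestronglyMeasurable 1
    (.of_forall fun y => by split_ifs <;> simp)

lemma integrable_integral_aucLoss (hf : Measurable f) (μ ν : Measure X)
    [IsFiniteMeasure μ] [IsFiniteMeasure ν] :
    Integrable (fun x => ∫ x', (if f x - f x' < 0 then (1 : ℝ) else 0) ∂ν) μ :=
  (integrable_ite_neg (g := fun p : X × X => f p.1 - f p.2) (by fun_prop)
    (μ.prod ν)).integral_prod_left

lemma aucRisk_smul_left (c : ENNReal) (μ ν : Measure X) :
    AUCRisk f (c • μ) ν = c.toReal * AUCRisk f μ ν := by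
  rw [AUCRisk, integral_smul_measure, smul_eq_mul, AUCRisk]

lemma aucRisk_smul_right (c : ENNReal) (μ ν : Measure X) :
    AUCRisk f μ (c • ν) = c.toReal * AUCRisk f μ ν := by
  simp only [AUCRisk, integral_smul_measure, smul_eq_mul, integral_const_mul]

lemma aucRisk_add_left (hf : Measurable f) (μ₁ μ₂ ν : Measure X)
    [IsFiniteMeasure μ₁] [IsFiniteMeasure μ₂] [IsFiniteMeasure ν] :
    AUCRisk f (μ₁ + μ₂) ν = AUCRisk f μ₁ ν + AUCRisk f μ₂ ν :=
  integral_add_measure (integrable_integral_aucLoss hf μ₁ ν)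
    (integrable_integral_aucLoss hf μ₂ ν)

lemma aucRisk_add_right (hf : Measurable f) (μ ν₁ ν₂ : Measure X)
    [IsFiniteMeasure μ] [IsFiniteMeasure ν₁] [IsFiniteMeasure ν₂] :
    AUCRisk f μ (ν₁ + ν₂) = AUCRisk f μ ν₁ + AUCRisk f μ ν₂ := by
  have hsplit : ∀ x, ∫ x', (if f x - f x' < 0 then (1 : ℝ) else 0) ∂(ν₁ + ν₂)
      = ∫ x', (if f x - f x' < 0 then (1 : ℝ) else 0) ∂ν₁
        + ∫ x', (if f x - f x' < 0 then (1 : ℝ) else 0) ∂ν₂ := fun x =>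
    integral_add_measure (integrable_ite_neg (by fun_prop) ν₁)
      (integrable_ite_neg (by fun_prop) ν₂)
  simp only [AUCRisk, hsplit]
  exact integral_add (integrable_integral_aucLoss hf μ ν₁) (integrable_integral_aucLoss hf μ ν₂)

/-- Off the null tie set `{y | f y = t}` exactly one of `t < f y`, `f y < t` holds. -/
lemma integral_ite_lt_add_integral_ite_gt (hf : Measurable f) (ν : Measure X)
    [IsFiniteMeasure ν] (hν : ∀ t : ℝ, ν {x | f x = t} = 0) (t : ℝ) :
    ∫ y, (if t - f y < 0 then (1 : ℝ) else 0) ∂ν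
      + ∫ y, (if f y - t < 0 then (1 : ℝ) else 0) ∂ν = ν.real Set.univ := by
  rw [← integral_add (integrable_ite_neg (by fun_prop) ν) (integrable_ite_neg (by fun_prop) ν)]
  have hae : ∀ᵐ y ∂ν, ((if t - f y < 0 then (1 : ℝ) else 0)
      + if f y - t < 0 then (1 : ℝ) else 0) = 1 := by
    filter_upwards [measure_eq_zero_iff_ae_notMem.mp (hν t)] with y hy
    rcases lt_trichotomy t (f y) with h | h | h
    · rw [if_pos (by linarith), if_neg (by linarith), add_zero]
    · exact absurd h.symm hy
    · rw [if_neg (by linarith), if_pos (by linarith), zero_add]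
  rw [integral_congr_ae hae, integral_const, smul_eq_mul, mul_one]

lemma aucRisk_add_aucRisk_swap (hf : Measurable f) (μ ν : Measure X)
    [IsFiniteMeasure μ] [IsFiniteMeasure ν] (hν : ∀ t : ℝ, ν {x | f x = t} = 0) :
    AUCRisk f μ ν + AUCRisk f ν μ = μ.real Set.univ * ν.real Set.univ := by
  have hswap : AUCRisk f ν μ = ∫ x, ∫ y, (if f y - f x < 0 then (1 : ℝ) else 0) ∂ν ∂μ :=
    integral_integral_swap (integrable_ite_neg (g := fun p : X × X => f p.1 - f p.2)
      (by fun_prop) (ν.prod μ))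
  have hswap_integrable :
      Integrable (fun x => ∫ y, (if f y - f x < 0 then (1 : ℝ) else 0) ∂ν) μ :=
    (integrable_ite_neg (g := fun p : X × X => f p.2 - f p.1) (by fun_prop)
      (μ.prod ν)).integral_prod_left
  rw [hswap, AUCRisk, ← integral_add (integrable_integral_aucLoss hf μ ν) hswap_integrable]
  simp only [integral_ite_lt_add_integral_ite_gt hf ν hν, integral_const, smul_eq_mul]

lemma aucRisk_self (hf : Measurable f) (μ : Measure X) [IsFiniteMeasure μ]
    (hμ : ∀ t : ℝ, μ {x | f x = t} = 0) :
    AUCRisk f μ μ = μ.real Set.univ ^ 2 / 2 := by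
  linarith [aucRisk_add_aucRisk_swap hf μ μ hμ]

end AUCRisk

/-- noisy-label AUC risk:
`R(f; p_P̃, p_Ñ) = ã·R_PN(f) + (1 − ã)/2` with `ã = 1 − η_P − η_N`. -/
theorem noisy_label_auc_risk {X : Type*} [MeasurableSpace X]
    (pP pN : Measure X) [IsProbabilityMeasure pP] [IsProbabilityMeasure pN]
    (ηP ηN : ℝ) (hηP : ηP ∈ Set.Icc (0 : ℝ) 1) (hηN : ηN ∈ Set.Icc (0 : ℝ) 1)
    (f : X → ℝ) (hf : Measurable f)
    (hP : ∀ t : ℝ, pP {x | f x = t} = 0)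
    (hN : ∀ t : ℝ, pN {x | f x = t} = 0)
    (pPt pNt : Measure X)
    (hpPt : pPt = ENNReal.ofReal (1 - ηP) • pP + ENNReal.ofReal ηP • pN)
    (hpNt : pNt = ENNReal.ofReal ηN • pP + ENNReal.ofReal (1 - ηN) • pN) :
    AUCRisk f pPt pNt
      = (1 - ηP - ηN) * AUCRisk f pP pN + (1 - (1 - ηP - ηN)) / 2 := by
  obtain ⟨hηP₀, hηP₁⟩ := hηP
  obtain ⟨hηN₀, hηN₁⟩ := hηN
  subst hpPt hpNt
  have hPN := aucRisk_add_aucRisk_swap hf pP pN hN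
  have hPP := aucRisk_self hf pP hP
  have hNN := aucRisk_self hf pN hN
  simp only [probReal_univ, one_pow, mul_one] at hPN hPP hNN
  simp only [aucRisk_add_left hf, aucRisk_add_right hf, aucRisk_smul_left, aucRisk_smul_right,
    ENNReal.toReal_ofReal hηP₀, ENNReal.toReal_ofReal hηN₀,
    ENNReal.toReal_ofReal (sub_nonneg.2 hηP₁), ENNReal.toReal_ofReal (sub_nonneg.2 hηN₁),
    hPP, hNN, eq_sub_of_add_eq' hPN]
  ring
end

section
/- (Positive-unlabeled AUC risk.) Let p_P and p_N be probability measures on X, let π_P, π_N ∈ [0,1] with π_P + π_N = 1, and let p_U = π_P·p_P + π_N·p_N be the unlabeled (marginal) distribution. Assume f : X → ℝ is measurable and the pushforward distributions of f under p_P and under p_N are atomless. Then the P-U 0–1 AUC risk satisfies R(f; p_P, p_U) = π_N·R_PN(f) + π_P/2. -/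
open MeasureTheory

/-! The risk is linear in the negative distribution, so
`R(f; p_P, p_U) = π_P R(f; p_P, p_P) + π_N R_PN(f)`. By Fubini, `R(f; μ, ν) + R(f; ν, μ)` is the
probability that two independent scores drawn from `μ` and `ν` differ, which is `1` when the scores
under `ν` have no atoms; hence `R(f; p_P, p_P) = 1/2`. -/

section

variable {α : Type*} [MeasurableSpace α] {g h : α → ℝ}

lemma integrable_ite_sub_neg (μ : Measure α) [IsFiniteMeasure μ] (hg : Measurable g)
    (hh : Measurable h) : Integrable (fun a => if g a - h a < 0 then (1 : ℝ) else 0) μ := by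
  refine Integrable.of_mem_Icc 0 1 ?_ (ae_of_all _ fun a => ?_)
  · exact (Measurable.ite (measurableSet_lt (hg.sub hh) measurable_const)
      measurable_const measurable_const).aemeasurable
  · split_ifs <;> simp

lemma integrable_integral_ite_sub_neg {β : Type*} [MeasurableSpace β] (μ : Measure α)
    (ν : Measure β) [IsFiniteMeasure μ] [IsFiniteMeasure ν] {g h : α → β → ℝ}
    (hg : Measurable (Function.uncurry g)) (hh : Measurable (Function.uncurry h)) :
    Integrable (fun a => ∫ b, (if g a b - h a b < 0 then (1 : ℝ) else 0) ∂ν) μ :=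
  (integrable_ite_sub_neg (μ.prod ν) hg hh).integral_prod_left

end

namespace AUCRisk

variable {X : Type*} [MeasurableSpace X] {f : X → ℝ}

lemma smul_right (μ ν : Measure X) (c : ENNReal) :
    AUCRisk f μ (c • ν) = c.toReal * AUCRisk f μ ν := by
  simp only [AUCRisk, integral_smul_measure, smul_eq_mul, integral_const_mul]

lemma add_right (hf : Measurable f) (μ ν₁ ν₂ : Measure X) [IsFiniteMeasure μ]
    [IsFiniteMeasure ν₁] [IsFiniteMeasure ν₂] :
    AUCRisk f μ (ν₁ + ν₂) = AUCRisk f μ ν₁ + AUCRisk f μ ν₂ := by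
  have hint (ν : Measure X) [IsFiniteMeasure ν] :=
    integrable_integral_ite_sub_neg (g := fun x _ => f x) (h := fun _ x' => f x') μ ν
      (hf.comp measurable_fst) (hf.comp measurable_snd)
  simp only [AUCRisk]
  rw [← integral_add (hint ν₁) (hint ν₂)]
  exact integral_congr_ae <| ae_of_all _ fun x => integral_add_measure
    (integrable_ite_sub_neg ν₁ measurable_const hf) (integrable_ite_sub_neg ν₂ measurable_const hf)

lemma add_swap (hf : Measurable f) (μ ν : Measure X) [IsProbabilityMeasure μ]
    [IsProbabilityMeasure ν] (hν : ∀ t : ℝ, ν {x | f x = t} = 0) :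
    AUCRisk f μ ν + AUCRisk f ν μ = 1 := by
  have hswap : AUCRisk f ν μ = ∫ x, ∫ x', (if f x' - f x < 0 then (1 : ℝ) else 0) ∂ν ∂μ :=
    integral_integral_swap
      (integrable_ite_sub_neg (ν.prod μ) (hf.comp measurable_fst) (hf.comp measurable_snd))
  have hinner (x : X) : ∫ x', (if f x - f x' < 0 then (1 : ℝ) else 0) ∂ν +
      ∫ x', (if f x' - f x < 0 then (1 : ℝ) else 0) ∂ν = 1 := by
    have hties : ∀ᵐ x' ∂ν, f x' ≠ f x := ae_iff.2 (by simpa using hν (f x))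
    rw [← integral_add (integrable_ite_sub_neg ν measurable_const hf)
      (integrable_ite_sub_neg ν hf measurable_const),
      integral_congr_ae (g := fun _ => (1 : ℝ)) ?_, integral_const, probReal_univ, one_smul]
    filter_upwards [hties] with x' hx'
    rcases hx'.lt_or_gt with hlt | hgt
    · simp [sub_neg.2 hlt, hlt.not_gt]
    · simp [sub_neg.2 hgt, hgt.not_gt]
  rw [hswap, AUCRisk, ← integral_add, integral_congr_ae (ae_of_all _ hinner), integral_const,
    probReal_univ, one_smul]
  · exact integrable_integral_ite_sub_neg (g := fun x _ => f x) (h := fun _ x' => f x') μ ν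
      (hf.comp measurable_fst) (hf.comp measurable_snd)
  · exact integrable_integral_ite_sub_neg (g := fun _ x' => f x') (h := fun x _ => f x) μ ν
      (hf.comp measurable_snd) (hf.comp measurable_fst)

lemma self_eq_half (hf : Measurable f) (μ : Measure X) [IsProbabilityMeasure μ]
    (hμ : ∀ t : ℝ, μ {x | f x = t} = 0) : AUCRisk f μ μ = 1 / 2 := by
  linarith [add_swap hf μ μ hμ]

end AUCRisk

theorem positive_unlabeled_auc_risk_general {X : Type*} [MeasurableSpace X]
    (pP pN : Measure X) [IsProbabilityMeasure pP] [IsProbabilityMeasure pN]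
    (πP πN : ℝ) (hπP : πP ∈ Set.Icc (0 : ℝ) 1) (hπN : πN ∈ Set.Icc (0 : ℝ) 1)
    (f : X → ℝ) (hf : Measurable f)
    (hP : ∀ t : ℝ, pP {x | f x = t} = 0)
    (pU : Measure X)
    (hpU : pU = ENNReal.ofReal πP • pP + ENNReal.ofReal πN • pN) :
    AUCRisk f pP pU = πN * AUCRisk f pP pN + πP / 2 := by
  have := pP.smul_finite (c := ENNReal.ofReal πP) ENNReal.ofReal_ne_top
  have := pN.smul_finite (c := ENNReal.ofReal πN) ENNReal.ofReal_ne_top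
  rw [hpU, AUCRisk.add_right hf, AUCRisk.smul_right, AUCRisk.smul_right,
    ENNReal.toReal_ofReal hπP.1, ENNReal.toReal_ofReal hπN.1, AUCRisk.self_eq_half hf pP hP]
  ring

/-- positive-unlabeled AUC risk:
`R(f; p_P, p_U) = π_N·R_PN(f) + π_P/2`. -/
theorem positive_unlabeled_auc_risk {X : Type*} [MeasurableSpace X]
    (pP pN : Measure X) [IsProbabilityMeasure pP] [IsProbabilityMeasure pN]
    (πP πN : ℝ) (hπP : πP ∈ Set.Icc (0 : ℝ) 1) (hπN : πN ∈ Set.Icc (0 : ℝ) 1)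
    (hsum : πP + πN = 1)
    (f : X → ℝ) (hf : Measurable f)
    (hP : ∀ t : ℝ, pP {x | f x = t} = 0)
    (hN : ∀ t : ℝ, pN {x | f x = t} = 0)
    (pU : Measure X)
    (hpU : pU = ENNReal.ofReal πP • pP + ENNReal.ofReal πN • pN) :
    AUCRisk f pP pU = πN * AUCRisk f pP pN + πP / 2 :=
  positive_unlabeled_auc_risk_general pP pN πP πN hπP hπN f hf hP pU hpU
end
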